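/- arXiv:2010.14661 — 2 statements merged into one kernel-verified Lean document; each statement's English description precedes it below -/
import Mathlib

section
/- Let G ~ G(n, p_n) with p_n = n^{-α} for a fixed 0 < α < 1. Then with probability tending to 1 as n → ∞, for every vertex v ∈ V, v is the unique vertex in N₁(v) adjacent to all other vertices of N₁(v). -/
open MeasureTheory ProbabilityTheory
open scoped ENNReal

/-- The Erdős–Rényi measure `G(n, p)`: each potential edge (unordered pair of vertices)
is present independently with probability `p`. -/
noncomputable def erMeasure (n : ℕ) (p : ℝ≥0∞) : Measure (Sym2 (Fin n) → Bool) :=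
  Measure.pi fun _ => (PMF.bernoulli (min p 1).toNNReal
    (by simpa using ENNReal.toNNReal_mono ENNReal.one_ne_top (min_le_right p 1))).toMeasure

/-- The simple graph determined by an edge-indicator configuration `ω`. -/
def graphOf (n : ℕ) (ω : Sym2 (Fin n) → Bool) : SimpleGraph (Fin n) where
  Adj x y := x ≠ y ∧ ω s(x, y) = true
  symm := by
    constructor
    intro x y h
    exact ⟨h.1.symm, by rw [Sym2.eq_swap]; exact h.2⟩
  loopless := by constructor; intro x h; exact h.1 rfl

instance (n : ℕ) (ω : Sym2 (Fin n) → Bool) : DecidableRel (graphOf n ω).Adj :=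
  fun x y => inferInstanceAs (Decidable (x ≠ y ∧ ω s(x, y) = true))

/-- The vertex set of the 1-neighborhood of `v`: `v` together with its neighbors. -/
def ball1 (n : ℕ) (ω : Sym2 (Fin n) → Bool) (v : Fin n) : Set (Fin n) :=
  insert v {w : Fin n | (graphOf n ω).Adj v w}

/-!
If some `w ≠ v` passes the test in `N₁(v)`, then every neighbour of `v` other than `w` is
adjacent to `w`. For a fixed pair `v ≠ w` the `n - 2` pairs of potential edges `(vu, wu)` are
independent, and each avoids the pattern "`vu` present, `wu` absent" with probability
`1 - p (1 - p)`. A union bound over the pairs `(v, w)` bounds the failure probability by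
`n² (1 - p (1 - p)) ^ (n - 2) ≤ n² exp (-n ^ (1 - α) / 4)`, which tends to `0`.
-/

open Filter Topology
open scoped NNReal

namespace MeasureTheory.Measure

variable {ι ι' κ β : Type*} [Fintype ι] [Fintype ι'] [Fintype κ] [MeasurableSpace β]
  (μ : Measure β) [IsProbabilityMeasure μ]

theorem pi_map_comp_of_injective {g : ι' → ι} (hg : g.Injective) :
    (Measure.pi fun _ : ι => μ).map (fun ω => ω ∘ g) = Measure.pi fun _ : ι' => μ := by
  have hind : iIndepFun (fun i (ω : ι → β) => ω (g i)) (Measure.pi fun _ : ι => μ) :=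
    (iIndepFun_pi (X := fun _ => id) fun _ => aemeasurable_id).precomp hg
  rw [show (fun ω : ι → β => ω ∘ g) = fun ω i => ω (g i) from rfl,
    hind.map_fun_eq_pi_map fun i => (measurable_pi_apply (g i)).aemeasurable]
  congr 1
  funext i
  exact (measurePreserving_eval _ (g i)).map_eq

theorem pi_map_curry :
    (Measure.pi fun _ : ι × κ => μ).map Function.curry =
      Measure.pi fun _ : ι => Measure.pi fun _ : κ => μ := by
  simpa only [infinitePi_eq_pi, MeasurableEquiv.coe_curry] using
    infinitePi_map_curry fun (_ : ι) (_ : κ) => μ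

theorem pi_setOf_forall_comp_mem {g : ι' × κ → ι} (hg : g.Injective) {T : Set (κ → β)}
    (hT : MeasurableSet T) :
    (Measure.pi fun _ : ι => μ) {ω | ∀ i, (fun k => ω (g (i, k))) ∈ T} =
      (Measure.pi fun _ : κ => μ) T ^ Fintype.card ι' := by
  have hset : {ω : ι → β | ∀ i, (fun k => ω (g (i, k))) ∈ T} =
      (Function.curry ∘ fun ω => ω ∘ g) ⁻¹' Set.univ.pi fun _ => T := by
    ext; simp only [Set.mem_preimage, Set.mem_univ_pi]; rfl
  rw [hset, ← map_apply (by fun_prop) (.univ_pi fun _ => hT),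
    ← map_map (by fun_prop) (by fun_prop), pi_map_comp_of_injective μ hg, pi_map_curry, pi_pi,
    Finset.prod_const, Finset.card_univ]

end MeasureTheory.Measure

theorem PMF.bernoulli_pi_setOf_imp (q : ℝ≥0) (hq : q ≤ 1) :
    (Measure.pi fun _ : Bool => (PMF.bernoulli q hq).toMeasure)
      {f | f false = true → f true = true} = ↑(1 - q * (1 - q)) := by
  have hcompl : {f : Bool → Bool | f false = true → f true = true}ᶜ =
      Set.univ.pi fun b => {!b} := by
    ext f
    simp only [Set.mem_compl_iff, Set.mem_ofPred_eq, Set.mem_univ_pi, Set.mem_singleton_iff,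
      Bool.forall_bool, Bool.not_false, Bool.not_true, _root_.not_imp, Bool.not_eq_true]
  rw [← compl_compl {f : Bool → Bool | _}, prob_compl_eq_one_sub (.compl .of_discrete), hcompl,
    Measure.pi_pi, Fintype.prod_bool]
  simp [PMF.bernoulli_apply, mul_comm]

theorem Sym2.injective_mk_cond {α : Type*} {v w : α} (hvw : v ≠ w) :
    Function.Injective fun p : {u // u ≠ v ∧ u ≠ w} × Bool => s(cond p.2 w v, (p.1 : α)) := by
  rintro ⟨⟨u, hu⟩, b⟩ ⟨⟨u', hu'⟩, b'⟩ h
  rcases Sym2.eq_iff.mp h with ⟨hb, rfl⟩ | ⟨h1, -⟩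
  · cases b <;> cases b' <;> simp_all [eq_comm]
  · cases b
    exacts [(hu'.1 h1.symm).elim, (hu'.2 h1.symm).elim]

theorem Fintype.card_subtype_ne_and_ne {α : Type*} [Fintype α] [DecidableEq α] {v w : α}
    (hvw : v ≠ w) : Fintype.card {u // u ≠ v ∧ u ≠ w} = Fintype.card α - 2 := by
  rw [Fintype.card_subtype, ← Finset.card_pair hvw, ← Finset.card_compl]
  congr 1
  ext u
  simp

instance (n : ℕ) (p : ℝ≥0∞) : IsProbabilityMeasure (erMeasure n p) := by
  unfold erMeasure; infer_instance

def uniqueCenter (n : ℕ) : Set (Sym2 (Fin n) → Bool) :=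
  {ω | ∀ v w : Fin n, w ∈ ball1 n ω v →
    (∀ u ∈ ball1 n ω v, u ≠ w → (graphOf n ω).Adj w u) → w = v}

section

variable {n : ℕ}

def neighborsCovered (v w : Fin n) : Set (Sym2 (Fin n) → Bool) :=
  {ω | ∀ u : {u // u ≠ v ∧ u ≠ w}, ω s(v, u) = true → ω s(w, u) = true}

theorem compl_uniqueCenter_subset :
    (uniqueCenter n)ᶜ ⊆ ⋃ x ∈ (Finset.univ : Finset (Fin n)).offDiag, neighborsCovered x.1 x.2 := by
  intro ω hω
  simp only [uniqueCenter, Set.mem_compl_iff, Set.mem_ofPred_eq, not_forall] at hω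
  obtain ⟨v, w, -, hcover, hwv⟩ := hω
  refine Set.mem_biUnion (x := (v, w)) (by simpa using Ne.symm hwv) fun ⟨u, huv, huw⟩ hvu => ?_
  exact (hcover u (Or.inr ⟨Ne.symm huv, hvu⟩) huw).2

theorem erMeasure_neighborsCovered (p : ℝ≥0∞) {v w : Fin n} (hvw : v ≠ w) :
    erMeasure n p (neighborsCovered v w) =
      ↑((1 - (min p 1).toNNReal * (1 - (min p 1).toNNReal)) ^ (n - 2)) := by
  have hset : neighborsCovered v w = {ω | ∀ u : {u // u ≠ v ∧ u ≠ w},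
      (fun b => ω s(cond b w v, (u : Fin n))) ∈ {f | f false = true → f true = true}} := rfl
  rw [erMeasure, hset, Measure.pi_setOf_forall_comp_mem _ (Sym2.injective_mk_cond hvw)
    .of_discrete, Fintype.card_subtype_ne_and_ne hvw, Fintype.card_fin, ENNReal.coe_pow]
  exact congrArg (· ^ (n - 2)) (PMF.bernoulli_pi_setOf_imp _ _)

theorem erMeasure_compl_uniqueCenter_le (p : ℝ≥0∞) :
    erMeasure n p (uniqueCenter n)ᶜ ≤
      (((n : ℝ≥0) ^ 2 * (1 - (min p 1).toNNReal * (1 - (min p 1).toNNReal)) ^ (n - 2) : ℝ≥0) :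
        ℝ≥0∞) := by
  set b := (1 - (min p 1).toNNReal * (1 - (min p 1).toNNReal)) ^ (n - 2)
  calc erMeasure n p (uniqueCenter n)ᶜ
      ≤ ∑ x ∈ (Finset.univ : Finset (Fin n)).offDiag, erMeasure n p (neighborsCovered x.1 x.2) :=
        (measure_mono compl_uniqueCenter_subset).trans (measure_biUnion_finset_le _ _)
    _ = (Finset.univ : Finset (Fin n)).offDiag.card * (b : ℝ≥0∞) := by
        rw [Finset.sum_congr rfl fun x hx =>
          erMeasure_neighborsCovered p (Finset.mem_offDiag.mp hx).2.2, Finset.sum_const,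
          nsmul_eq_mul]
    _ ≤ (((n : ℝ≥0) ^ 2 * b : ℝ≥0) : ℝ≥0∞) := by
        push_cast
        gcongr
        exact_mod_cast (Finset.card_le_univ _).trans_eq (by simp [sq])

end

theorem Real.one_sub_pow_le_exp_neg_mul {t : ℝ} (ht : t ≤ 1) (m : ℕ) :
    (1 - t) ^ m ≤ Real.exp (-(m * t)) := by
  rw [← mul_neg, Real.exp_nat_mul]
  exact pow_le_pow_left₀ (by linarith) (Real.one_sub_le_exp_neg t) m

theorem tendsto_natCast_sq_mul_exp_neg_mul_rpow {β c : ℝ} (hβ : 0 < β) (hc : 0 < c) :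
    Tendsto (fun n : ℕ => (n : ℝ) ^ 2 * Real.exp (-(c * (n : ℝ) ^ β))) atTop (𝓝 0) := by
  have hlim := (tendsto_rpow_mul_exp_neg_mul_atTop_nhds_zero (2 / β) c hc).comp
    ((tendsto_rpow_atTop hβ).comp tendsto_natCast_atTop_atTop)
  refine hlim.congr fun n => ?_
  simp only [Function.comp_apply, neg_mul]
  rw [← Real.rpow_mul n.cast_nonneg, mul_div_cancel₀ _ hβ.ne', Real.rpow_two]

theorem tendsto_natCast_sq_mul_one_sub_rpow_mul_pow {α : ℝ} (hα0 : 0 < α) (hα1 : α < 1) :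
    Tendsto (fun n : ℕ => (n : ℝ) ^ 2 *
      (1 - (n : ℝ) ^ (-α) * (1 - (n : ℝ) ^ (-α))) ^ (n - 2)) atTop (𝓝 0) := by
  have hpow : Tendsto (fun n : ℕ => (n : ℝ) ^ α) atTop atTop :=
    (tendsto_rpow_atTop hα0).comp tendsto_natCast_atTop_atTop
  refine squeeze_zero' ?_ ?_ (tendsto_natCast_sq_mul_exp_neg_mul_rpow (β := 1 - α) (c := 1 / 4)
    (by linarith) (by norm_num))
  · refine Eventually.of_forall fun n => mul_nonneg (sq_nonneg _) (pow_nonneg ?_ _)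
    nlinarith [sq_nonneg ((n : ℝ) ^ (-α) - 1 / 2)]
  filter_upwards [eventually_ge_atTop 4, hpow.eventually_ge_atTop 2] with n hn4 hn2
  have hn : (4 : ℝ) ≤ n := by exact_mod_cast hn4
  set r := (n : ℝ) ^ (-α) with hr
  have hr0 : 0 ≤ r := Real.rpow_nonneg n.cast_nonneg _
  have hr_half : r ≤ 1 / 2 := by
    rw [hr, Real.rpow_neg n.cast_nonneg, one_div]
    exact inv_anti₀ (by norm_num) hn2
  have hnr : (n : ℝ) ^ (1 - α) = n * r := by
    rw [hr, sub_eq_add_neg, Real.rpow_add (by linarith), Real.rpow_one]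
  have hsub : ((n - 2 : ℕ) : ℝ) = n - 2 := by push_cast [Nat.cast_sub (by omega : 2 ≤ n)]; ring
  gcongr
  calc (1 - r * (1 - r)) ^ (n - 2) ≤ Real.exp (-((n - 2 : ℕ) * (r * (1 - r)))) :=
        Real.one_sub_pow_le_exp_neg_mul (by nlinarith) _
    _ ≤ Real.exp (-(1 / 4 * (n : ℝ) ^ (1 - α))) := by
        have hquarter : (n : ℝ) / 4 ≤ (n - 2) * (1 - r) := by nlinarith
        rw [Real.exp_le_exp, neg_le_neg_iff, hnr, hsub]
        nlinarith [mul_le_mul_of_nonneg_left hquarter hr0]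

theorem NNReal.coe_one_sub_mul_one_sub {q : ℝ≥0} (hq : q ≤ 1) :
    ((1 - q * (1 - q) : ℝ≥0) : ℝ) = 1 - q * (1 - q) := by
  rw [NNReal.coe_sub (mul_le_one' hq tsub_le_self), NNReal.coe_mul, NNReal.coe_sub hq,
    NNReal.coe_one]

theorem ENNReal.coe_toNNReal_min_ofReal_one {r : ℝ} (h0 : 0 ≤ r) (h1 : r ≤ 1) :
    ((min (ENNReal.ofReal r) 1).toNNReal : ℝ) = r := by
  rw [min_eq_left (ENNReal.ofReal_le_one.mpr h1), ENNReal.coe_toNNReal_eq_toReal,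
    ENNReal.toReal_ofReal h0]

theorem tendsto_erMeasure_compl_uniqueCenter {α : ℝ} (hα0 : 0 < α) (hα1 : α < 1) :
    Tendsto (fun n : ℕ => erMeasure n (ENNReal.ofReal ((n : ℝ) ^ (-α))) (uniqueCenter n)ᶜ)
      atTop (𝓝 0) := by
  set q := fun n : ℕ => (min (ENNReal.ofReal ((n : ℝ) ^ (-α))) 1).toNNReal
  have hbound : Tendsto (fun n : ℕ => (n : ℝ≥0) ^ 2 * (1 - q n * (1 - q n)) ^ (n - 2))
      atTop (𝓝 0) := by
    rw [← NNReal.tendsto_coe]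
    refine (tendsto_natCast_sq_mul_one_sub_rpow_mul_pow hα0 hα1).congr' ?_
    filter_upwards [eventually_ge_atTop 1] with n hn
    have hr1 : (n : ℝ) ^ (-α) ≤ 1 :=
      Real.rpow_le_one_of_one_le_of_nonpos (by exact_mod_cast hn) (by linarith)
    have hq : (q n : ℝ) = (n : ℝ) ^ (-α) :=
      ENNReal.coe_toNNReal_min_ofReal_one (Real.rpow_nonneg n.cast_nonneg _) hr1
    rw [NNReal.coe_mul, NNReal.coe_pow, NNReal.coe_pow,
      NNReal.coe_one_sub_mul_one_sub (by rw [← NNReal.coe_le_coe, hq]; exact_mod_cast hr1), hq]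
    rfl
  exact tendsto_of_tendsto_of_tendsto_of_le_of_le tendsto_const_nhds
    (ENNReal.tendsto_coe.2 hbound) (fun _ => zero_le)
    (fun n => erMeasure_compl_uniqueCenter_le _)

/-- In `G(n, n^{-α})` with `0 < α < 1`, with probability tending to `1` as `n → ∞`,
for every vertex `v`, the center `v` is the unique vertex of `N₁(v)` that is adjacent to
every other vertex of `N₁(v)`. -/
theorem find_center_one_neighborhood (α : ℝ) (hα0 : 0 < α) (hα1 : α < 1) :
    Filter.Tendsto
      (fun n : ℕ =>
        (erMeasure n (ENNReal.ofReal ((n : ℝ) ^ (-α)))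
          {ω | ∀ v w : Fin n, w ∈ ball1 n ω v →
            (∀ u ∈ ball1 n ω v, u ≠ w → (graphOf n ω).Adj w u) → w = v}).toReal)
      Filter.atTop (nhds 1) := by
  have hgood : Tendsto (fun n : ℕ => erMeasure n (ENNReal.ofReal ((n : ℝ) ^ (-α)))
      (uniqueCenter n)) atTop (𝓝 1) := by
    have hlim := ENNReal.Tendsto.sub tendsto_const_nhds
      (tendsto_erMeasure_compl_uniqueCenter hα0 hα1) (Or.inl ENNReal.one_ne_top)
    rw [tsub_zero] at hlim
    refine hlim.congr fun n => ?_
    rw [prob_compl_eq_one_sub .of_discrete, ENNReal.sub_sub_cancel ENNReal.one_ne_top prob_le_one]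
  exact (ENNReal.tendsto_toReal ENNReal.one_ne_top).comp hgood
end

section
/- Suppose for a random graph G on n labeled vertices, a deterministic reconstruction algorithm maps each possible collection of 1-neighborhoods to a graph. Suppose conditional on |E(G)| = m, G is uniform over all C(C(n,2), m) labeled graphs with m edges. If S is a set of neighborhood collections and S_E a set of edge counts, then the failure probability of the algorithm (failing to output a graph isomorphic to G) is at least P(|E| ∈ S_E) · min_{m ∈ S_E} (C(C(n,2),m) - n!·|S|)/C(C(n,2),m) - P(N₁(G) ∉ S). -/
open MeasureTheory ProbabilityTheory Finset
open scoped ENNReal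

/-! Up to isomorphism, the algorithm outputs on observations in `S` cover a set `T` of at most
`n! · |S|` labeled graphs, and whenever the edge count lies in `S_E`, either the algorithm fails,
or `obs G ∉ S`, or `G ∈ T`. Conditionally on `|E(G)| = m` the graph is uniform over
`C(C(n,2), m)` graphs, so `P(G ∈ T, |E(G)| = m) ≤ P(|E(G)| = m) · n! |S| / C(C(n,2), m)`;
summing over `m ∈ S_E` and taking a union bound gives the claim. -/

namespace SimpleGraph

lemma Iso.eq_comap_symm {V W : Type*} {H : SimpleGraph V} {G : SimpleGraph W} (φ : H ≃g G) :
    G = H.comap φ.symm := by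
  ext a b
  exact φ.symm.map_adj_iff.symm

variable {V : Type*} [Fintype V] [DecidableEq V]

open Classical in
lemma card_filter_iso_le_factorial (H : SimpleGraph V) :
    #{G : SimpleGraph V | Nonempty (H ≃g G)} ≤ (Fintype.card V).factorial := calc
  _ ≤ #(univ.image fun σ : Equiv.Perm V => H.comap σ) := by
    refine card_le_card fun G hG => ?_
    obtain ⟨φ⟩ := (mem_filter.1 hG).2
    exact mem_image.2 ⟨φ.symm.toEquiv, mem_univ _, φ.eq_comap_symm.symm⟩
  _ ≤ _ := card_image_le.trans_eq Fintype.card_perm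

end SimpleGraph

section UniformOnEvent

variable {X : Type*} [MeasurableSpace X] [DiscreteMeasurableSpace X]
  {μ : Measure X} [IsFiniteMeasure μ] {E : Set X} {N : ℕ}

lemma measure_inter_singleton_le_of_cond_eq
    (hunif : μ E ≠ 0 → ∀ x ∈ E, μ[|E] {x} = 1 / N) (x : X) :
    μ (E ∩ {x}) ≤ μ E / N := by
  by_cases hx : x ∈ E
  · by_cases hE : μ E = 0
    · simp [hE, measure_inter_null_of_null_left]
    rw [← cond_mul_eq_inter .of_discrete _ μ, hunif hE x hx, one_div, ENNReal.div_eq_inv_mul]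
  · simp [Set.inter_singleton_eq_empty.2 hx]

lemma measureReal_finset_inter_le_of_cond_eq
    (hunif : μ E ≠ 0 → ∀ x ∈ E, μ[|E] {x} = 1 / N) (t : Finset X) :
    μ.real (↑t ∩ E) ≤ μ.real E * (#t / N) := by
  rcases eq_or_ne (μ E) 0 with hE | hE
  · simp [measureReal_def, hE, measure_inter_null_of_null_right]
  -- a conditional probability is at most `1`, whereas `1 / 0 = ∞` in `ℝ≥0∞`
  have hN : N ≠ 0 := by
    rintro rfl
    obtain ⟨x, hx⟩ := nonempty_of_measure_ne_zero hE
    have := prob_le_one (μ := μ[|E]) (s := {x})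
    simp [hunif hE x hx] at this
  have hcover : ↑t ∩ E = ⋃ x ∈ t, E ∩ {x} := by ext; simp [and_comm]
  calc μ.real (↑t ∩ E) ≤ ∑ x ∈ t, μ.real (E ∩ {x}) := hcover ▸ measureReal_biUnion_finset_le _ _
    _ ≤ ∑ _x ∈ t, μ.real E / N := by
      gcongr with x
      rw [measureReal_def, measureReal_def, ← ENNReal.toReal_natCast N, ← ENNReal.toReal_div]
      exact ENNReal.toReal_mono (ENNReal.div_ne_top (measure_ne_top μ E) (by simpa))
        (measure_inter_singleton_le_of_cond_eq hunif x)
    _ = μ.real E * (#t / N) := by rw [sum_const, nsmul_eq_mul]; ring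

lemma measureReal_inter_preimage_le_of_forall_fiber {β : Type*} {f : X → β} {s : Finset β}
    {t : Set X} {r : ℝ} (h : ∀ b ∈ s, μ.real (t ∩ f ⁻¹' {b}) ≤ μ.real (f ⁻¹' {b}) * r) :
    μ.real (t ∩ f ⁻¹' s) ≤ μ.real (f ⁻¹' s) * r := by
  have hcover : t ∩ f ⁻¹' s = ⋃ b ∈ s, t ∩ f ⁻¹' {b} := by ext; simp
  calc μ.real (t ∩ f ⁻¹' s) ≤ ∑ b ∈ s, μ.real (t ∩ f ⁻¹' {b}) :=
        hcover ▸ measureReal_biUnion_finset_le _ _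
    _ ≤ ∑ b ∈ s, μ.real (f ⁻¹' {b}) * r := sum_le_sum h
    _ = μ.real (f ⁻¹' s) * r := by
      rw [← sum_mul, sum_measureReal_preimage_singleton s fun _ _ => .of_discrete]

end UniformOnEvent

-- For `C = 0` both sides degenerate through `x / 0 = 0`.
lemma div_le_one_sub_sub_div {a k C : ℝ} (hak : a ≤ k) (hC : 0 ≤ C) :
    a / C ≤ 1 - (C - k) / C := by
  rcases hC.eq_or_lt with rfl | hC
  · simp
  · rw [sub_div, div_self hC.ne', sub_sub_cancel]
    exact div_le_div_of_nonneg_right hak hC.le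

theorem reconstruction_failure_lower_bound_general {n : ℕ} {𝒪 : Type*}
    [MeasurableSpace (SimpleGraph (Fin n))]
    (hdisc : ∀ s : Set (SimpleGraph (Fin n)), MeasurableSet s)
    (μ : Measure (SimpleGraph (Fin n))) [IsProbabilityMeasure μ]
    (obs : SimpleGraph (Fin n) → 𝒪) (A : 𝒪 → SimpleGraph (Fin n))
    (S : Finset 𝒪) (S_E : Finset ℕ) (hSE : S_E.Nonempty)
    (hunif : ∀ m : ℕ, μ {G | G.edgeSet.ncard = m} ≠ 0 →
      ∀ G₀ : SimpleGraph (Fin n), G₀.edgeSet.ncard = m →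
        (μ[|{G | G.edgeSet.ncard = m}]) {G₀} = 1 / (Nat.choose (n.choose 2) m : ℝ≥0∞)) :
    (μ {G | ¬ Nonempty (A (obs G) ≃g G)}).toReal ≥
      (μ {G | G.edgeSet.ncard ∈ S_E}).toReal *
          (S_E.inf' hSE fun m =>
            ((Nat.choose (n.choose 2) m : ℝ) - n.factorial * S.card) /
              (Nat.choose (n.choose 2) m : ℝ)) -
        (μ {G | obs G ∉ S}).toReal := by
  classical
  have : DiscreteMeasurableSpace (SimpleGraph (Fin n)) := ⟨hdisc⟩
  set f : ℕ → ℝ := fun m =>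
    ((Nat.choose (n.choose 2) m : ℝ) - n.factorial * #S) / (Nat.choose (n.choose 2) m : ℝ)
  let T : Finset (SimpleGraph (Fin n)) := S.biUnion fun s => {G | Nonempty (A s ≃g G)}
  have hT : (#T : ℝ) ≤ n.factorial * #S := by
    have := card_biUnion_le.trans <| sum_le_card_nsmul S _ _ fun s _ =>
      SimpleGraph.card_filter_iso_le_factorial (A s)
    rw [smul_eq_mul, Fintype.card_fin, mul_comm] at this
    exact_mod_cast this
  have hcover : {G | G.edgeSet.ncard ∈ S_E} ⊆ {G | ¬ Nonempty (A (obs G) ≃g G)} ∪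
      {G | obs G ∉ S} ∪ (↑T ∩ {G | G.edgeSet.ncard ∈ S_E}) := by
    intro G hG
    by_cases hiso : Nonempty (A (obs G) ≃g G)
    · by_cases hS : obs G ∈ S
      · exact .inr ⟨mem_biUnion.2 ⟨obs G, hS, by simpa using hiso⟩, hG⟩
      · exact .inl (.inr hS)
    · exact .inl (.inl hiso)
  have hTE : μ.real (↑T ∩ {G | G.edgeSet.ncard ∈ S_E}) ≤
      μ.real {G | G.edgeSet.ncard ∈ S_E} * (1 - S_E.inf' hSE f) :=
    measureReal_inter_preimage_le_of_forall_fiber fun m hm =>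
      (measureReal_finset_inter_le_of_cond_eq (hunif m) T).trans <|
        mul_le_mul_of_nonneg_left ((div_le_one_sub_sub_div hT (Nat.cast_nonneg _)).trans
          (sub_le_sub_left (inf'_le f hm) 1)) measureReal_nonneg
  have := (measureReal_mono (μ := μ) hcover).trans <|
    (measureReal_union_le _ _).trans (add_le_add_left (measureReal_union_le _ _) _)
  simp only [measureReal_def] at this hTE ⊢
  linarith

/-- Counting lower bound on the failure probability of any deterministic reconstruction
algorithm. Here `obs G` is the collection of (labeled-center) 1-neighborhoods of `G`,
valued in an abstract observation type `𝒪`; `A` is the algorithm, mapping each possible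
observation to a graph. Assuming that, conditional on the edge count `|E(G)| = m`, `G` is
uniform over all `C(C(n,2), m)` labeled graphs with `m` edges, the probability that the
algorithm fails to output a graph isomorphic to `G` is at least
`P(|E| ∈ S_E) · min_{m ∈ S_E} (C(C(n,2),m) - n!·|S|)/C(C(n,2),m) - P(obs G ∉ S)`. -/
theorem reconstruction_failure_lower_bound {n : ℕ} {𝒪 : Type*} [DecidableEq 𝒪]
    [MeasurableSpace (SimpleGraph (Fin n))]
    (hdisc : ∀ s : Set (SimpleGraph (Fin n)), MeasurableSet s)
    (μ : Measure (SimpleGraph (Fin n))) [IsProbabilityMeasure μ]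
    (obs : SimpleGraph (Fin n) → 𝒪) (A : 𝒪 → SimpleGraph (Fin n))
    (S : Finset 𝒪) (S_E : Finset ℕ) (hSE : S_E.Nonempty)
    (hunif : ∀ m : ℕ, μ {G | G.edgeSet.ncard = m} ≠ 0 →
      ∀ G₀ : SimpleGraph (Fin n), G₀.edgeSet.ncard = m →
        (μ[|{G | G.edgeSet.ncard = m}]) {G₀} = 1 / (Nat.choose (n.choose 2) m : ℝ≥0∞)) :
    (μ {G | ¬ Nonempty (A (obs G) ≃g G)}).toReal ≥
      (μ {G | G.edgeSet.ncard ∈ S_E}).toReal *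
          (S_E.inf' hSE fun m =>
            ((Nat.choose (n.choose 2) m : ℝ) - n.factorial * S.card) /
              (Nat.choose (n.choose 2) m : ℝ)) -
        (μ {G | obs G ∉ S}).toReal :=
  reconstruction_failure_lower_bound_general hdisc μ obs A S S_E hSE hunif
end
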